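/- Let 𝔉 be a filter on TP[0,1]. Suppose there exists a countable subset {tₙ}ₙ∈ℕ of [0,1] with pairwise distinct elements and A ∈ 𝔉 such that Σₙ n·ℓ(Π,T,tₙ) < 1 for all (Π,T) ∈ A. Then there exists an unbounded function f : [0,1] → [0,∞) (namely f(tₙ) = n and f = 0 otherwise) such that S(f,Π,T) < 1 for all (Π,T) ∈ A; in particular S(f,·,·) is 𝔉-bounded. -/

import Mathlib

open Filter Topology

/-- A tagged partition of the segment `[a, b]`:
points `a = ξ₀ ≤ ξ₁ ≤ ... ≤ ξₙ = b` together with tags `tₖ ∈ [ξₖ₋₁, ξₖ]`. -/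
structure TaggedPartition (a b : ℝ) where
  n : ℕ
  pts : Fin (n + 1) → ℝ
  mono : Monotone pts
  first : pts 0 = a
  last : pts (Fin.last n) = b
  tag : Fin n → ℝ
  tag_ge : ∀ k : Fin n, pts k.castSucc ≤ tag k
  tag_le : ∀ k : Fin n, tag k ≤ pts k.succ

namespace TaggedPartition

variable {a b : ℝ}

/-- Length `Δₖ = ξₖ - ξₖ₋₁` of the `k`-th subinterval. -/
def len (P : TaggedPartition a b) (k : Fin P.n) : ℝ :=
  P.pts k.succ - P.pts k.castSucc

/-- Riemann sum `S(f, Π, T) = Σₖ f(tₖ)·Δₖ`. -/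
def RS (f : ℝ → ℝ) (P : TaggedPartition a b) : ℝ :=
  ∑ k, f (P.tag k) * P.len k

/-- `d(Π) < δ`: every subinterval has length `< δ`. -/
def diamLT (P : TaggedPartition a b) (δ : ℝ) : Prop :=
  ∀ k : Fin P.n, P.len k < δ

/-- `ℓ(Π, T, τ)`: total length of the subintervals whose tag is `τ`
(`0` if `τ` is not a tag). -/
noncomputable def tagLen (P : TaggedPartition a b) (τ : ℝ) : ℝ :=
  ∑ k ∈ Finset.univ.filter (fun k => P.tag k = τ), P.len k

/-- The (finite) set of tags of a tagged partition. -/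
noncomputable def tagSet (P : TaggedPartition a b) : Finset ℝ :=
  Finset.image P.tag Finset.univ

/-- The distance
`ρ((Π₁,T₁),(Π₂,T₂)) = Σ_{t∈T₁∩T₂}|Δ₁(t)−Δ₂(t)| + Σ_{t∈T₁∖T₂}Δ₁(t) + Σ_{t∈T₂∖T₁}Δ₂(t)`. -/
noncomputable def ρ (P Q : TaggedPartition a b) : ℝ :=
  ∑ τ ∈ P.tagSet ∩ Q.tagSet, |P.tagLen τ - Q.tagLen τ|
    + ∑ τ ∈ P.tagSet \ Q.tagSet, P.tagLen τ
    + ∑ τ ∈ Q.tagSet \ P.tagSet, Q.tagLen τ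

end TaggedPartition

/-- Tagged partitions of `[0,1]`. -/
abbrev TP01 := TaggedPartition 0 1

/-- The filter `𝔉_{<δ}` on `TP[0,1]` generated by the base
`P_{<δ} = {(Π,T) : d(Π) < δ}`, `δ > 0`; convergence of Riemann sums along it
is Riemann integrability. -/
noncomputable def riemannFilter : Filter TP01 :=
  ⨅ δ ∈ Set.Ioi (0 : ℝ), Filter.principal {P : TP01 | P.diamLT δ}

/-- `𝔉₂` ρ-dominates `𝔉₁`. -/
def RhoDominates (F₂ F₁ : Filter TP01) : Prop :=
  ∀ ε > (0:ℝ), ∀ A₁ ∈ F₁, ∃ A₂ ∈ F₂, ∀ Q ∈ A₂, ∃ P ∈ A₁, TaggedPartition.ρ P Q < ε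

/-! Regrouping a Riemann sum by tags gives `S(f,Π,T) = Σ_τ f(τ)·ℓ(Π,T,τ)`. When `f` vanishes off
the range of the injective sequence `t`, this sum reindexes along `t` to `Σₙ f(tₙ)·ℓ(Π,T,tₙ)`;
for `f(tₙ) = n` it is exactly the series assumed to be `< 1` on `A`. -/

namespace TaggedPartition

variable {a b : ℝ} (P : TaggedPartition a b)

theorem tagLen_eq_zero_of_notMem_tagSet {τ : ℝ} (hτ : τ ∉ P.tagSet) : P.tagLen τ = 0 := by
  refine Finset.sum_eq_zero fun k hk => absurd ?_ hτ
  rw [(Finset.mem_filter.1 hk).2.symm]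
  exact Finset.mem_image_of_mem _ (Finset.mem_univ k)

theorem RS_eq_sum_tagSet (f : ℝ → ℝ) : P.RS f = ∑ τ ∈ P.tagSet, f τ * P.tagLen τ := by
  rw [RS, ← Finset.sum_fiberwise_of_maps_to (t := P.tagSet) (g := P.tag)
    fun k _ => Finset.mem_image_of_mem _ (Finset.mem_univ k)]
  refine Finset.sum_congr rfl fun τ _ => ?_
  rw [tagLen, Finset.mul_sum]
  exact Finset.sum_congr rfl fun k hk => by rw [(Finset.mem_filter.1 hk).2]

theorem RS_eq_tsum (f : ℝ → ℝ) : P.RS f = ∑' τ, f τ * P.tagLen τ :=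
  (P.RS_eq_sum_tagSet f).trans (tsum_eq_sum fun τ hτ => by
    rw [P.tagLen_eq_zero_of_notMem_tagSet hτ, mul_zero]).symm

theorem RS_eq_tsum_comp {f : ℝ → ℝ} {t : ℕ → ℝ} (ht : Function.Injective t)
    (hf : Function.support f ⊆ Set.range t) :
    P.RS f = ∑' n, f (t n) * P.tagLen (t n) := by
  rw [RS_eq_tsum]
  exact (ht.tsum_eq (f := fun τ => f τ * P.tagLen τ)
    ((Function.support_mul_subset_left _ _).trans hf)).symm

end TaggedPartition

theorem small_tagLen_sum_implies_bounded_sums_general (t : ℕ → ℝ)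
    (ht : Function.Injective t) (htm : ∀ n, t n ∈ Set.Icc (0:ℝ) 1)
    (A : Set TP01)
    (h : ∀ P ∈ A, (∑' n : ℕ, (n:ℝ) * TaggedPartition.tagLen P (t n)) < 1) :
    ∃ f : ℝ → ℝ, (∀ n : ℕ, f (t n) = n) ∧ (∀ x, (∀ n, x ≠ t n) → f x = 0) ∧
      (∀ x, 0 ≤ f x) ∧ (∀ C : ℝ, ∃ x ∈ Set.Icc (0:ℝ) 1, C < f x) ∧
      ∀ P ∈ A, TaggedPartition.RS f P < 1 := by
  set f : ℝ → ℝ := Function.extend t (fun n => (n : ℝ)) 0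
  have hf_t : ∀ n, f (t n) = n := ht.extend_apply _ _
  have hf_off : ∀ x, (∀ n, x ≠ t n) → f x = 0 := fun x hx =>
    Function.extend_apply' _ _ x fun ⟨n, hn⟩ => hx n hn.symm
  have hf_support : Function.support f ⊆ Set.range t := by
    intro x hx
    by_contra hx'
    exact hx (hf_off x fun n hn => hx' ⟨n, hn.symm⟩)
  refine ⟨f, hf_t, hf_off, fun x => ?_, fun C => ?_, fun P hP => ?_⟩
  · by_cases hx : ∃ n, t n = x
    · obtain ⟨n, rfl⟩ := hx
      simp only [hf_t, Nat.cast_nonneg]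
    · exact (hf_off x fun n hn => hx ⟨n, hn.symm⟩).ge
  · obtain ⟨n, hn⟩ := exists_nat_gt C
    exact ⟨t n, htm n, by rwa [hf_t]⟩
  · simpa only [P.RS_eq_tsum_comp ht hf_support, hf_t] using h P hP

/-- (2) ⇒ (1) of Theorem `th`: given distinct points `tₙ ∈ [0,1]` and `A ∈ 𝔉` with
`Σₙ n·ℓ(Π,T,tₙ) < 1` on `A`, the function `f(tₙ) = n`, `f = 0` elsewhere, is
nonnegative, unbounded, and has Riemann sums `< 1` on `A`; in particular they are
`𝔉`-bounded. -/
theorem small_tagLen_sum_implies_bounded_sums (F : Filter TP01) (t : ℕ → ℝ)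
    (ht : Function.Injective t) (htm : ∀ n, t n ∈ Set.Icc (0:ℝ) 1)
    (A : Set TP01) (hA : A ∈ F)
    (h : ∀ P ∈ A, (∑' n : ℕ, (n:ℝ) * TaggedPartition.tagLen P (t n)) < 1) :
    ∃ f : ℝ → ℝ, (∀ n : ℕ, f (t n) = n) ∧ (∀ x, (∀ n, x ≠ t n) → f x = 0) ∧
      (∀ x, 0 ≤ f x) ∧ (∀ C : ℝ, ∃ x ∈ Set.Icc (0:ℝ) 1, C < f x) ∧
      ∀ P ∈ A, TaggedPartition.RS f P < 1 :=
  small_tagLen_sum_implies_bounded_sums_general t ht htm A h
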